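/- For nonnegative integers n, k, the sum Σ_{m=0}^n ((1/k!)·Σ_{l=0}^k C(k,l)(-1)^{k-l}(l - k/2)^m)·λ^{n-m}·S₁(n,m) equals T_{2,λ}(n,k) if n ≥ k and 0 if n < k. -/

import Mathlib

/-!
With `x_l = l - k/2`, both sides equal `∑ l, (1/k!) C(k,l) (-1)^(k-l) (x_l)_{n,λ}`, where
`(x)_{n,λ} = ∏_{i<n} (x - iλ) = λ^n · descPochhammer n (x/λ)` is the degenerate falling factorial.
On the left this is because `S₁(n,m)` are the coefficients of `descPochhammer n`. On the right,
near `t = 0` the generating function is `∑ l, (1/k!) C(k,l) (-1)^(k-l) (1+λt)^(x_l/λ)`, and the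
`n`-th derivative of `(1+λt)^b` at `0` is `λ^n · descPochhammer n b`. When `n < k`, the sum is the
`k`-th forward difference of a polynomial of degree `n` in `l`, hence zero.
-/

noncomputable def T2 (lam x : ℝ) (n k : ℕ) : ℝ :=
  iteratedDeriv n (fun t : ℝ =>
    (k.factorial : ℝ)⁻¹ * (1 + lam * t) ^ (x / lam) *
      ((1 + lam * t) ^ (1 / (2 * lam)) - (1 + lam * t) ^ (-(1 / (2 * lam)))) ^ k) 0

noncomputable def S1 (n k : ℕ) : ℤ :=
  (∏ i ∈ Finset.range n, (Polynomial.X - Polynomial.C (i : ℤ))).coeff k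

open Finset Polynomial

theorem iteratedDeriv_comp_mul_left {𝕜 F : Type*} [NontriviallyNormedField 𝕜]
    [NormedAddCommGroup F] [NormedSpace 𝕜 F] (n : ℕ) (f : 𝕜 → F) (c : 𝕜) :
    iteratedDeriv n (fun x => f (c * x)) = fun x => c ^ n • iteratedDeriv n f (c * x) := by
  induction n with
  | zero => simp
  | succ n ih =>
    ext x
    rw [iteratedDeriv_succ, ih, deriv_fun_const_smul_field,
      deriv_comp_mul_left (f := iteratedDeriv n f), iteratedDeriv_succ, smul_smul, pow_succ]

theorem iteratedDeriv_one_add_mul_rpow_zero (lam b : ℝ) (n : ℕ) :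
    iteratedDeriv n (fun t => (1 + lam * t) ^ b) 0 = lam ^ n * (descPochhammer ℝ n).eval b := by
  have := congrFun (iteratedDeriv_comp_mul_left n (fun y : ℝ => (1 + y) ^ b) lam) 0
  simp only [mul_zero, smul_eq_mul] at this
  rw [this, congrFun (iteratedDeriv_comp_const_add n (fun y : ℝ => y ^ b) 1) 0, add_zero,
    iteratedDeriv_eq_iterate, Real.iter_deriv_rpow_const, Real.one_rpow, mul_one]

theorem Polynomial.sum_range_choose_mul_eval_eq_zero {R : Type*} [CommRing R] {P : R[X]} {k : ℕ}
    (hP : P.natDegree < k) :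
    ∑ l ∈ range (k + 1), (k.choose l : R) * (-1) ^ (k - l) * P.eval (l : R) = 0 := by
  have := congrFun (fwdDiff_iter_eq_zero_of_degree_lt hP) 0
  rw [fwdDiff_iter_eq_sum_shift] at this
  simpa [mul_comm] using this

theorem prod_range_X_sub_C_eq_descPochhammer (R : Type*) [CommRing R] (n : ℕ) :
    ∏ i ∈ range n, (X - C (i : R)) = descPochhammer R n := by
  induction n with
  | zero => simp
  | succ n ih => rw [prod_range_succ, ih, descPochhammer_succ_right, map_natCast]

theorem S1_eq_coeff_descPochhammer (n m : ℕ) : (S1 n m : ℝ) = (descPochhammer ℝ n).coeff m := by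
  rw [S1, prod_range_X_sub_C_eq_descPochhammer, ← descPochhammer_map (Int.castRingHom ℝ),
    coeff_map, eq_intCast]

theorem sum_pow_mul_S1_eq_descPochhammer_eval {lam : ℝ} (hlam : lam ≠ 0) (n : ℕ) (c : ℝ) :
    ∑ m ∈ range (n + 1), c ^ m * lam ^ (n - m) * (S1 n m : ℝ)
      = lam ^ n * (descPochhammer ℝ n).eval (c / lam) := by
  rw [eval_eq_sum_range, descPochhammer_natDegree, mul_sum]
  refine sum_congr rfl fun m hm => ?_
  rw [S1_eq_coeff_descPochhammer, pow_sub₀ _ hlam (Nat.le_of_lt_succ (mem_range.mp hm)), div_pow]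
  field_simp

theorem Real.rpow_sub_rpow_neg_pow {x : ℝ} (hx : 0 < x) (s : ℝ) (k : ℕ) :
    (x ^ s - x ^ (-s)) ^ k
      = ∑ l ∈ range (k + 1), (k.choose l : ℝ) * (-1) ^ (k - l) * x ^ ((2 * l - k) * s) := by
  rw [sub_eq_add_neg, add_pow]
  refine sum_congr rfl fun l hl => ?_
  have hlk : l ≤ k := Nat.le_of_lt_succ (mem_range.mp hl)
  rw [neg_pow, ← Real.rpow_natCast (x ^ s), ← Real.rpow_natCast (x ^ (-s)),
    ← Real.rpow_mul hx.le, ← Real.rpow_mul hx.le]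
  calc x ^ (s * l) * ((-1) ^ (k - l) * x ^ (-s * (k - l : ℕ))) * k.choose l
      = k.choose l * (-1) ^ (k - l) * (x ^ (s * l) * x ^ (-s * (k - l : ℕ))) := by ring
    _ = _ := by rw [← Real.rpow_add hx, Nat.cast_sub hlk]; ring_nf

theorem T2_zero_eq_sum (lam : ℝ) (n k : ℕ) :
    T2 lam 0 n k = ∑ l ∈ range (k + 1), (k.factorial : ℝ)⁻¹ * k.choose l * (-1) ^ (k - l) *
      (lam ^ n * (descPochhammer ℝ n).eval (((l : ℝ) - k / 2) / lam)) := by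
  have hpos : ∀ᶠ t in nhds (0 : ℝ), 0 < 1 + lam * t :=
    continuousAt_const.eventually_lt (by fun_prop) (by simp)
  have hexpand : (fun t : ℝ => (k.factorial : ℝ)⁻¹ * (1 + lam * t) ^ (0 / lam) *
      ((1 + lam * t) ^ (1 / (2 * lam)) - (1 + lam * t) ^ (-(1 / (2 * lam)))) ^ k)
      =ᶠ[nhds 0] fun t => ∑ l ∈ range (k + 1), (k.factorial : ℝ)⁻¹ * k.choose l * (-1) ^ (k - l) *
        (1 + lam * t) ^ (((l : ℝ) - k / 2) / lam) := by
    filter_upwards [hpos] with t ht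
    rw [zero_div, Real.rpow_zero, mul_one, Real.rpow_sub_rpow_neg_pow ht, mul_sum]
    refine sum_congr rfl fun l _ => ?_
    ring_nf
  rw [T2, hexpand.iteratedDeriv_eq, iteratedDeriv_fun_sum]
  · simp_rw [iteratedDeriv_const_mul_field, iteratedDeriv_one_add_mul_rpow_zero]
  · intro l _
    exact contDiffAt_const.mul (by fun_prop (disch := simp))

theorem sum_choose_mul_descPochhammer_eval_eq_zero {n k : ℕ} (hnk : n < k) (a b : ℝ) :
    ∑ l ∈ range (k + 1), (k.choose l : ℝ) * (-1) ^ (k - l) *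
      (descPochhammer ℝ n).eval (((l : ℝ) - a) / b) = 0 := by
  set P : ℝ[X] := (descPochhammer ℝ n).comp (C b⁻¹ * (X - C a))
  have hP : P.natDegree < k := by
    refine (natDegree_comp_le.trans ?_).trans_lt hnk
    rw [descPochhammer_natDegree]
    exact mul_le_of_le_one_right n.zero_le
      ((natDegree_C_mul_le _ _).trans (natDegree_X_sub_C a).le)
  convert sum_range_choose_mul_eval_eq_zero hP using 3 with l
  simp [P, div_eq_inv_mul]

theorem T2_num_via_stirling_first (lam : ℝ) (hlam : lam ≠ 0) (n k : ℕ) :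
    ∑ m ∈ Finset.range (n + 1),
        ((k.factorial : ℝ)⁻¹ *
            ∑ l ∈ Finset.range (k + 1),
              (k.choose l : ℝ) * (-1) ^ (k - l) * ((l : ℝ) - (k : ℝ) / 2) ^ m)
          * lam ^ (n - m) * (S1 n m : ℝ)
      = if k ≤ n then T2 lam 0 n k else 0 := by
  calc _ = ∑ l ∈ range (k + 1), (k.factorial : ℝ)⁻¹ * k.choose l * (-1) ^ (k - l) *
          (lam ^ n * (descPochhammer ℝ n).eval (((l : ℝ) - k / 2) / lam)) := by
        simp_rw [← sum_pow_mul_S1_eq_descPochhammer_eval hlam, mul_sum, sum_mul]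
        rw [sum_comm]
        exact sum_congr rfl fun _ _ => sum_congr rfl fun _ _ => by ring
    _ = _ := by
        split_ifs with hkn
        · exact (T2_zero_eq_sum lam n k).symm
        · calc _ = (k.factorial : ℝ)⁻¹ * lam ^ n * ∑ l ∈ range (k + 1), (k.choose l : ℝ) *
                (-1) ^ (k - l) * (descPochhammer ℝ n).eval (((l : ℝ) - k / 2) / lam) := by
                rw [mul_sum]; exact sum_congr rfl fun _ _ => by ring
            _ = 0 := by
                rw [sum_choose_mul_descPochhammer_eval_eq_zero (not_le.mp hkn), mul_zero]
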